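/- Let S be a left I-order in a primitive inverse semigroup Q with zero. If a⁻¹b and c⁻¹d are nonzero elements of Q with a,b,c,d ∈ S, then a⁻¹b R c⁻¹d in Q if and only if a λ c in S, and a⁻¹b L c⁻¹d in Q if and only if b λ d in S. -/

import Mathlib

/-!
In a primitive inverse semigroup two nonzero idempotents with nonzero product coincide, so
`x * y ≠ 0` forces `x⁻¹x = yy⁻¹`. Hence a nonzero `q = a⁻¹b` has `qq⁻¹ = a⁻¹a` and `q⁻¹q = b⁻¹b`,
and since Green's relations of an inverse semigroup are detected by these idempotents, both claims
reduce to: for `a ≠ 0`, `a λ c` iff `a⁻¹a = c⁻¹c`. If `xa = yc ≠ 0` then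
`a⁻¹a = (xa)⁻¹(xa) = (yc)⁻¹(yc) = c⁻¹c`; conversely, writing `ac⁻¹ = x⁻¹y` with `x, y ∈ S`
gives `xa = yc ≠ 0`.
-/

/-- An inverse semigroup structure on a semigroup with zero, given by an inverse map. -/
def IsInverseSemigroup (Q : Type*) [SemigroupWithZero Q] (inv : Q → Q) : Prop :=
  (∀ a : Q, a * inv a * a = a) ∧ (∀ a : Q, inv a * a * inv a = inv a) ∧
  (∀ e f : Q, e * e = e → f * f = f → e * f = f * e)

/-- A primitive inverse semigroup: all nonzero idempotents are primitive. -/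
def IsPrimitiveInvSemigroup (Q : Type*) [SemigroupWithZero Q] (inv : Q → Q) : Prop :=
  IsInverseSemigroup Q inv ∧
  ∀ e : Q, e * e = e → e ≠ 0 →
    ∀ f : Q, f * f = f → e * f = f → f * e = f → f = 0 ∨ f = e

/-- Green's R relation (via Q¹). -/
def GreenR {Q : Type*} [SemigroupWithZero Q] (a b : Q) : Prop :=
  a = b ∨ ∃ u v : Q, a * u = b ∧ b * v = a

/-- Green's L relation (via Q¹). -/
def GreenL {Q : Type*} [SemigroupWithZero Q] (a b : Q) : Prop :=
  a = b ∨ ∃ u v : Q, u * a = b ∧ v * b = a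

/-- Categorical at 0. -/
def CategoricalAtZero (S : Type*) [SemigroupWithZero S] : Prop :=
  ∀ a b c : S, a * b ≠ 0 → b * c ≠ 0 → a * b * c ≠ 0

/-- 0-cancellative. -/
def ZeroCancellative (S : Type*) [SemigroupWithZero S] : Prop :=
  (∀ a b c : S, a * b = a * c → a * b ≠ 0 → b = c) ∧
  (∀ a b c : S, b * a = c * a → b * a ≠ 0 → b = c)

/-- The relation R* on a semigroup, defined via S¹ = WithOne S. -/
def RStar {S : Type*} [SemigroupWithZero S] (a b : S) : Prop :=
  ∀ x y : WithOne S, x * (a : WithOne S) = y * (a : WithOne S) ↔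
    x * (b : WithOne S) = y * (b : WithOne S)

/-- The relation λ on a whole semigroup with zero. -/
def Lam {S : Type*} [SemigroupWithZero S] (a b : S) : Prop :=
  (a = 0 ∧ b = 0) ∨ ∃ x y : S, x * a = y * b ∧ x * a ≠ 0

/-- The relation λ relative to a subset S of Q. -/
def LamOn {Q : Type*} [SemigroupWithZero Q] (S : Set Q) (a b : Q) : Prop :=
  (a = 0 ∧ b = 0) ∨ ∃ x ∈ S, ∃ y ∈ S, x * a = y * b ∧ x * a ≠ 0

/-- The relation ρ relative to a subset S of Q. -/
def RhoOn {Q : Type*} [SemigroupWithZero Q] (S : Set Q) (a b : Q) : Prop :=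
  (a = 0 ∧ b = 0) ∨ ∃ x ∈ S, ∃ y ∈ S, a * x = b * y ∧ a * x ≠ 0

/-- The relation R* on a subset S of Q, defined via S¹. -/
def RStarOn {Q : Type*} [SemigroupWithZero Q] (S : Set Q) (a b : Q) : Prop :=
  (∀ x ∈ S, ∀ y ∈ S, (x * a = y * a ↔ x * b = y * b)) ∧
  (∀ x ∈ S, (x * a = a ↔ x * b = b)) ∧
  (∀ y ∈ S, (a = y * a ↔ b = y * b))

/-- S is a subsemigroup of Q. -/
def IsSubsemigroup {Q : Type*} [SemigroupWithZero Q] (S : Set Q) : Prop :=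
  ∀ a ∈ S, ∀ b ∈ S, a * b ∈ S

/-- S is a left I-order in Q (with respect to the inverse map `inv`). -/
def IsLeftIOrder {Q : Type*} [SemigroupWithZero Q] (S : Set Q) (inv : Q → Q) : Prop :=
  IsSubsemigroup S ∧ ∀ q : Q, ∃ a ∈ S, ∃ b ∈ S, q = inv a * b

namespace IsInverseSemigroup

variable {Q : Type*} [SemigroupWithZero Q] {inv : Q → Q}

theorem mul_inv_mul (h : IsInverseSemigroup Q inv) (a : Q) : a * inv a * a = a := h.1 a

theorem inv_mul_inv (h : IsInverseSemigroup Q inv) (a : Q) : inv a * a * inv a = inv a :=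
  h.2.1 a

theorem commute_of_isIdempotentElem (h : IsInverseSemigroup Q inv) {e f : Q}
    (he : IsIdempotentElem e) (hf : IsIdempotentElem f) : Commute e f :=
  h.2.2 e f he hf

theorem isIdempotentElem_mul_inv (h : IsInverseSemigroup Q inv) (a : Q) :
    IsIdempotentElem (a * inv a) := by
  rw [IsIdempotentElem, ← mul_assoc, h.mul_inv_mul]

theorem isIdempotentElem_inv_mul (h : IsInverseSemigroup Q inv) (a : Q) :
    IsIdempotentElem (inv a * a) := by
  rw [IsIdempotentElem, ← mul_assoc, h.inv_mul_inv]

theorem eq_inv_of_mul_mul (h : IsInverseSemigroup Q inv) {a x : Q}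
    (hax : a * x * a = a) (hxa : x * a * x = x) : x = inv a := by
  have hax_idem : IsIdempotentElem (a * x) := by rw [IsIdempotentElem, ← mul_assoc, hax]
  have hxa_idem : IsIdempotentElem (x * a) := by rw [IsIdempotentElem, ← mul_assoc, hxa]
  calc x = x * a * x := hxa.symm
    _ = x * ((a * inv a) * (a * x)) := by rw [← mul_assoc (a * inv a), h.mul_inv_mul, mul_assoc]
    _ = x * ((a * x) * (a * inv a)) := by
        rw [(h.commute_of_isIdempotentElem hax_idem (h.isIdempotentElem_mul_inv a)).eq]
    _ = x * a * inv a := by simp only [← mul_assoc, hxa]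
    _ = ((x * a) * (inv a * a)) * inv a := by rw [mul_assoc (x * a), h.inv_mul_inv]
    _ = ((inv a * a) * (x * a)) * inv a := by
        rw [(h.commute_of_isIdempotentElem hxa_idem (h.isIdempotentElem_inv_mul a)).eq]
    _ = inv a := by rw [mul_assoc (inv a) a, ← mul_assoc a x a, hax, h.inv_mul_inv]

theorem inv_inv (h : IsInverseSemigroup Q inv) (a : Q) : inv (inv a) = a :=
  (h.eq_inv_of_mul_mul (h.inv_mul_inv a) (h.mul_inv_mul a)).symm

theorem mul_inv_rev (h : IsInverseSemigroup Q inv) (a b : Q) : inv (a * b) = inv b * inv a := by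
  refine (h.eq_inv_of_mul_mul ?_ ?_).symm
  · calc a * b * (inv b * inv a) * (a * b) = a * ((b * inv b) * (inv a * a)) * b := by
          simp only [mul_assoc]
      _ = a * ((inv a * a) * (b * inv b)) * b := by
          rw [(h.commute_of_isIdempotentElem (h.isIdempotentElem_mul_inv b)
            (h.isIdempotentElem_inv_mul a)).eq]
      _ = a * b := by
          simp only [← mul_assoc, h.mul_inv_mul]
          rw [mul_assoc a b, mul_assoc a, h.mul_inv_mul]
  · calc inv b * inv a * (a * b) * (inv b * inv a)
          = inv b * ((inv a * a) * (b * inv b)) * inv a := by simp only [mul_assoc]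
      _ = inv b * ((b * inv b) * (inv a * a)) * inv a := by
          rw [(h.commute_of_isIdempotentElem (h.isIdempotentElem_inv_mul a)
            (h.isIdempotentElem_mul_inv b)).eq]
      _ = inv b * inv a := by
          simp only [← mul_assoc, h.inv_mul_inv]
          rw [mul_assoc (inv b) (inv a), mul_assoc (inv b), h.inv_mul_inv]

theorem inv_zero (h : IsInverseSemigroup Q inv) : inv 0 = 0 := by
  simpa using (h.inv_mul_inv 0).symm

theorem mul_inv_ne_zero (h : IsInverseSemigroup Q inv) {a : Q} (ha : a ≠ 0) : a * inv a ≠ 0 :=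
  fun h0 => ha (by rw [← h.mul_inv_mul a, h0, zero_mul])

theorem mul_inv_mul_mul_inv_of_mul_eq (h : IsInverseSemigroup Q inv) {x y u : Q}
    (hu : x * u = y) : x * inv x * (y * inv y) = y * inv y := by
  subst hu
  simp only [← mul_assoc, h.mul_inv_mul]

theorem inv_mul_mul_inv_mul_of_mul_eq (h : IsInverseSemigroup Q inv) {x y u : Q}
    (hu : u * x = y) : inv y * y * (inv x * x) = inv y * y := by
  subst hu
  rw [mul_assoc, mul_assoc u, ← mul_assoc x, h.mul_inv_mul]

theorem greenR_iff (h : IsInverseSemigroup Q inv) {x y : Q} :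
    GreenR x y ↔ x * inv x = y * inv y := by
  refine ⟨?_, fun hxy => Or.inr ⟨inv x * y, inv y * x, ?_, ?_⟩⟩
  · rintro (rfl | ⟨u, v, hu, hv⟩)
    · rfl
    calc x * inv x = y * inv y * (x * inv x) := (h.mul_inv_mul_mul_inv_of_mul_eq hv).symm
      _ = x * inv x * (y * inv y) := (h.commute_of_isIdempotentElem
          (h.isIdempotentElem_mul_inv y) (h.isIdempotentElem_mul_inv x)).eq
      _ = y * inv y := h.mul_inv_mul_mul_inv_of_mul_eq hu
  · rw [← mul_assoc, hxy, h.mul_inv_mul]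
  · rw [← mul_assoc, ← hxy, h.mul_inv_mul]

theorem greenL_iff (h : IsInverseSemigroup Q inv) {x y : Q} :
    GreenL x y ↔ inv x * x = inv y * y := by
  refine ⟨?_, fun hxy => Or.inr ⟨y * inv x, x * inv y, ?_, ?_⟩⟩
  · rintro (rfl | ⟨u, v, hu, hv⟩)
    · rfl
    calc inv x * x = inv x * x * (inv y * y) := (h.inv_mul_mul_inv_mul_of_mul_eq hv).symm
      _ = inv y * y * (inv x * x) := (h.commute_of_isIdempotentElem
          (h.isIdempotentElem_inv_mul x) (h.isIdempotentElem_inv_mul y)).eq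
      _ = inv y * y := h.inv_mul_mul_inv_mul_of_mul_eq hu
  · rw [mul_assoc, hxy, ← mul_assoc, h.mul_inv_mul]
  · rw [mul_assoc, ← hxy, ← mul_assoc, h.mul_inv_mul]

theorem mul_mul_inv_of_inv_mul_eq (h : IsInverseSemigroup Q inv) {x a : Q}
    (hxa : inv x * x = a * inv a) : x * a * inv (x * a) = x * inv x :=
  calc x * a * inv (x * a) = x * (a * inv a) * inv x := by
        rw [h.mul_inv_rev]; simp only [mul_assoc]
    _ = x * inv x := by rw [← hxa, ← mul_assoc x, h.mul_inv_mul]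

theorem inv_mul_mul_of_inv_mul_eq (h : IsInverseSemigroup Q inv) {x a : Q}
    (hxa : inv x * x = a * inv a) : inv (x * a) * (x * a) = inv a * a :=
  calc inv (x * a) * (x * a) = inv a * (inv x * x) * a := by
        rw [h.mul_inv_rev]; simp only [mul_assoc]
    _ = inv a * a := by rw [hxa, ← mul_assoc, h.inv_mul_inv]

end IsInverseSemigroup

namespace IsPrimitiveInvSemigroup

variable {Q : Type*} [SemigroupWithZero Q] {inv : Q → Q}

theorem eq_of_mul_ne_zero (hP : IsPrimitiveInvSemigroup Q inv) {e f : Q}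
    (he : IsIdempotentElem e) (hf : IsIdempotentElem f) (hef : e * f ≠ 0) : e = f := by
  have hcomm : Commute e f := hP.1.commute_of_isIdempotentElem he hf
  have hg : IsIdempotentElem (e * f) := he.mul_of_commute hcomm hf
  have below_e : e * f = e := by
    refine (hP.2 e he (left_ne_zero_of_mul hef) _ hg ?_ ?_).resolve_left hef
    · rw [← mul_assoc, he.eq]
    · rw [mul_assoc, ← hcomm.eq, ← mul_assoc, he.eq]
  have below_f : e * f = f := by
    refine (hP.2 f hf (right_ne_zero_of_mul hef) _ hg ?_ ?_).resolve_left hef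
    · rw [← mul_assoc, ← hcomm.eq, mul_assoc, hf.eq]
    · rw [mul_assoc, hf.eq]
  exact below_e.symm.trans below_f

theorem inv_mul_self_eq_mul_inv_self (hP : IsPrimitiveInvSemigroup Q inv) {x y : Q}
    (hxy : x * y ≠ 0) : inv x * x = y * inv y := by
  have h := hP.1
  refine hP.eq_of_mul_ne_zero (h.isIdempotentElem_inv_mul x) (h.isIdempotentElem_mul_inv y)
    fun h0 => hxy ?_
  calc x * y = x * (inv x * x * (y * inv y)) * y := by
        conv_lhs => rw [← h.mul_inv_mul x, ← h.mul_inv_mul y]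
        simp only [mul_assoc]
    _ = 0 := by rw [h0, mul_zero, zero_mul]

theorem mul_mul_inv_self (hP : IsPrimitiveInvSemigroup Q inv) {x a : Q} (hxa : x * a ≠ 0) :
    x * a * inv (x * a) = x * inv x :=
  hP.1.mul_mul_inv_of_inv_mul_eq (hP.inv_mul_self_eq_mul_inv_self hxa)

theorem inv_mul_mul_self (hP : IsPrimitiveInvSemigroup Q inv) {x a : Q} (hxa : x * a ≠ 0) :
    inv (x * a) * (x * a) = inv a * a :=
  hP.1.inv_mul_mul_of_inv_mul_eq (hP.inv_mul_self_eq_mul_inv_self hxa)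

theorem inv_mul_self_eq_of_lamOn (hP : IsPrimitiveInvSemigroup Q inv) {S : Set Q} {a c : Q}
    (hac : LamOn S a c) : inv a * a = inv c * c := by
  rcases hac with ⟨rfl, rfl⟩ | ⟨x, -, y, -, hxy, hne⟩
  · rfl
  have hne' : y * c ≠ 0 := hxy ▸ hne
  rw [← hP.inv_mul_mul_self hne, ← hP.inv_mul_mul_self hne', hxy]

theorem lamOn_of_inv_mul_self_eq (hP : IsPrimitiveInvSemigroup Q inv) {S : Set Q}
    (hS : ∀ q : Q, ∃ x ∈ S, ∃ y ∈ S, q = inv x * y) {a c : Q} (ha : a ≠ 0)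
    (hac : inv a * a = inv c * c) : LamOn S a c := by
  have h := hP.1
  have hq : a * inv c ≠ 0 := by
    have : a * inv c * (c * inv a) = a * inv a := by
      rw [mul_assoc, ← mul_assoc (inv c), ← hac, h.inv_mul_inv]
    exact left_ne_zero_of_mul (this ▸ h.mul_inv_ne_zero ha)
  obtain ⟨x, hxS, y, hyS, hxy⟩ := hS (a * inv c)
  rw [hxy] at hq
  have hx : x * inv x = y * inv y := by
    simpa only [h.inv_inv] using hP.inv_mul_self_eq_mul_inv_self hq
  have hy : x * (a * inv c) = y := by rw [hxy, ← mul_assoc, hx, h.mul_inv_mul]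
  have hac' : x * a = y * c :=
    calc x * a = x * (a * (inv a * a)) := by rw [← mul_assoc a, h.mul_inv_mul]
      _ = y * c := by rw [hac, ← hy]; simp only [mul_assoc]
  refine Or.inr ⟨x, hxS, y, hyS, hac', fun h0 => right_ne_zero_of_mul hq ?_⟩
  rw [← hy, ← mul_assoc, h0, zero_mul]

theorem lamOn_iff (hP : IsPrimitiveInvSemigroup Q inv) {S : Set Q}
    (hS : ∀ q : Q, ∃ x ∈ S, ∃ y ∈ S, q = inv x * y) {a c : Q} (ha : a ≠ 0) :
    LamOn S a c ↔ inv a * a = inv c * c :=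
  ⟨hP.inv_mul_self_eq_of_lamOn, hP.lamOn_of_inv_mul_self_eq hS ha⟩

end IsPrimitiveInvSemigroup

theorem stmt_14 {Q : Type*} [SemigroupWithZero Q] (inv : Q → Q)
    (hQ : IsPrimitiveInvSemigroup Q inv) (S : Set Q)
    (hS : IsLeftIOrder S inv) :
    ∀ a ∈ S, ∀ b ∈ S, ∀ c ∈ S, ∀ d ∈ S,
      inv a * b ≠ 0 → inv c * d ≠ 0 →
      ((GreenR (inv a * b) (inv c * d) ↔ LamOn S a c) ∧
       (GreenL (inv a * b) (inv c * d) ↔ LamOn S b d)) := by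
  intro a _ b _ c _ d _ hab hcd
  have h := hQ.1
  have ha : a ≠ 0 := by
    rintro rfl
    exact hab (by rw [h.inv_zero, zero_mul])
  constructor
  · rw [h.greenR_iff, hQ.mul_mul_inv_self hab, hQ.mul_mul_inv_self hcd, h.inv_inv, h.inv_inv]
    exact (hQ.lamOn_iff hS.2 ha).symm
  · rw [h.greenL_iff, hQ.inv_mul_mul_self hab, hQ.inv_mul_mul_self hcd]
    exact (hQ.lamOn_iff hS.2 (right_ne_zero_of_mul hab)).symm
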